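/- Let Ω ⊂ ℝ^N be a bounded open set, let u : Ω → ℝ be a Borel function extended to zero outside Ω, and let u ≥ 0, u ∈ L^∞(Ω), with Ω^t = {x ∈ Ω : u(x) > t} and Ω^t_1 the set of points of density 1 of Ω^t. Then for every t > 0, t · ℋ^{N−1}((∂*Ω^t ∪ Ω^t_1) ∩ ∂Ω) ≤ ∫_{∂Ω} u⁺(y) dℋ^{N−1}(y). -/

import Mathlib

open MeasureTheory Metric Set Filter Topology ENNReal

noncomputable section

abbrev RN (N : ℕ) := EuclideanSpace ℝ (Fin N)

/-- `E` has density `t` at `x`. -/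
def HasDensityAt {N : ℕ} (E : Set (RN N)) (t : ℝ) (x : RN N) : Prop :=
  Tendsto (fun ρ : ℝ => volume (E ∩ ball x ρ) / volume (ball x ρ))
    (𝓝[>] 0) (𝓝 (ENNReal.ofReal t))

/-- The set of points where `E` has density `t`. -/
def densityPts {N : ℕ} (E : Set (RN N)) (t : ℝ) : Set (RN N) := {x | HasDensityAt E t x}

/-- The essential boundary `∂* E`. -/
def essBoundary {N : ℕ} (E : Set (RN N)) : Set (RN N) :=
  univ \ (densityPts E 0 ∪ densityPts E 1)

/-- Approximate upper limit `v⁺(x)`. -/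
def apUpper {N : ℕ} (v : RN N → ℝ) (x : RN N) : EReal :=
  sInf ((fun t : ℝ => (t : EReal)) '' {t | HasDensityAt {y | v y > t} 0 x})

/-- Approximate lower limit `v⁻(x)`. -/
def apLower {N : ℕ} (v : RN N → ℝ) (x : RN N) : EReal :=
  sSup ((fun t : ℝ => (t : EReal)) '' {t | HasDensityAt {y | v y > t} 1 x})

/-- The approximate discontinuity set `S(v)`. -/
def apDiscont {N : ℕ} (v : RN N → ℝ) : Set (RN N) := {x | apUpper v x ≠ apLower v x}

/-- Conversion from `EReal` to `ℝ≥0∞`, sending `⊤` to `⊤` and negatives to `0`. -/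
def erealToENNReal (x : EReal) : ℝ≥0∞ :=
  if x = ⊤ then ⊤ else ENNReal.ofReal x.toReal

/-- `|v⁺(x) - v⁻(x)|` as an extended nonnegative real. -/
def jumpE {N : ℕ} (v : RN N → ℝ) (x : RN N) : ℝ≥0∞ :=
  erealToENNReal (apUpper v x - apLower v x) ⊔ erealToENNReal (apLower v x - apUpper v x)

/-- Divergence of a vector field. -/
def divg {N : ℕ} (g : RN N → RN N) (x : RN N) : ℝ :=
  ∑ i, fderiv ℝ g x (EuclideanSpace.single i 1) i

/-- Total variation `|Du|(Ω)`. -/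
def totVar {N : ℕ} (u : RN N → ℝ) (Ω : Set (RN N)) : ℝ≥0∞ :=
  ⨆ (g : RN N → RN N) (_ : ContDiff ℝ 1 g) (_ : HasCompactSupport g)
    (_ : tsupport g ⊆ Ω) (_ : ∀ x, ‖g x‖ ≤ 1),
    ENNReal.ofReal (∫ x in Ω, u x * divg g x)

/-- The isoperimetric constant `C(N)`. -/
def isoConst (N : ℕ) : ℝ≥0∞ :=
  volume (ball (0 : RN N) 1) ^ (((N : ℝ) - 1) / N) /
    μH[(N : ℝ) - 1] (sphere (0 : RN N) 1)

/-- `s` is σ-finite with respect to `μ`. -/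
def SigmaFiniteOn {N : ℕ} (μ : Measure (RN N)) (s : Set (RN N)) : Prop :=
  ∃ f : ℕ → Set (RN N), (∀ n, MeasurableSet (f n) ∧ μ (f n) < ⊤) ∧ s = ⋃ n, f n

/-- `v` is the weak (distributional) gradient of `u` on `Ω`. -/
def IsWeakGradOn {N : ℕ} (u : RN N → ℝ) (v : RN N → RN N) (Ω : Set (RN N)) : Prop :=
  ∀ g : RN N → ℝ, ContDiff ℝ 1 g → HasCompactSupport g → tsupport g ⊆ Ω →
    ∀ i : Fin N, ∫ x in Ω, u x * fderiv ℝ g x (EuclideanSpace.single i 1) =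
      -∫ x in Ω, v x i * g x


/-! A boundary point of `Ω` lies in `∂*Ω^t ∪ Ω^t_1` exactly when `Ω^t` does not have density `0`
there; then neither does the larger set `{u > t}`, so `u⁺ ≥ t` at that point, and the estimate is
Chebyshev's inequality for `u⁺` on `∂Ω`. For the integral to see this set, it must be Borel: by
the doubling of Lebesgue measure, density `0` can be tested along rational radii, which turns
`densityPts E 0` into a countable combination of measurable conditions. -/

section Density

variable {N : ℕ}

def densityRatio (E : Set (RN N)) (x : RN N) (ρ : ℝ) : ℝ≥0∞ :=
  volume (E ∩ ball x ρ) / volume (ball x ρ)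

theorem HasDensityAt.zero_of_subset {E F : Set (RN N)} {x : RN N} (h : HasDensityAt F 0 x)
    (hEF : E ⊆ F) : HasDensityAt E 0 x := by
  rw [HasDensityAt, ENNReal.ofReal_zero] at h ⊢
  exact tendsto_of_tendsto_of_tendsto_of_le_of_le tendsto_const_nhds h (fun _ => zero_le)
    fun _ => by gcongr

theorem essBoundary_union_densityPts_one (E : Set (RN N)) :
    essBoundary E ∪ densityPts E 1 = (densityPts E 0)ᶜ := by
  ext x
  have hdisj : x ∈ densityPts E 1 → x ∉ densityPts E 0 := fun h1 h0 => by
    simpa using tendsto_nhds_unique (h0 : HasDensityAt E 0 x) (h1 : HasDensityAt E 1 x)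
  simp only [essBoundary, mem_union, Set.mem_sdiff, mem_univ, true_and, mem_compl_iff]
  tauto

theorem coe_le_apUpper_of_not_hasDensityAt_zero {v : RN N → ℝ} {E : Set (RN N)} {t : ℝ}
    {x : RN N} (hE : E ⊆ {y | t < v y}) (hx : ¬ HasDensityAt E 0 x) :
    (t : EReal) ≤ apUpper v x := by
  refine le_sInf ?_
  rintro _ ⟨s, hs, rfl⟩
  rw [EReal.coe_le_coe_iff]
  by_contra! hst
  exact hx (hs.zero_of_subset fun y hy => hst.trans (hE hy))

theorem ofReal_le_erealToENNReal {a : EReal} {t : ℝ} (h : (t : EReal) ≤ a) :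
    ENNReal.ofReal t ≤ erealToENNReal a := by
  unfold erealToENNReal
  split_ifs with htop
  · exact le_top
  · have hbot : a ≠ ⊥ := ((EReal.bot_lt_coe t).trans_le h).ne'
    rw [← EReal.coe_toReal htop hbot, EReal.coe_le_coe_iff] at h
    exact ENNReal.ofReal_le_ofReal h

theorem measurable_densityRatio {E : Set (RN N)} (hE : MeasurableSet E) (ρ : ℝ) :
    Measurable fun x => densityRatio E x ρ := by
  have hpairs : MeasurableSet {p : RN N × RN N | p.2 ∈ E ∧ dist p.2 p.1 < ρ} :=
    (hE.preimage measurable_snd).inter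
      (isOpen_lt (continuous_snd.dist continuous_fst) continuous_const).measurableSet
  have hnum : Measurable fun x => volume (E ∩ ball x ρ) :=
    measurable_measure_prodMk_left hpairs
  simp_rw [densityRatio, Measure.addHaar_ball_center volume _ ρ]
  exact hnum.div_const _

theorem densityRatio_le_two_pow_mul (E : Set (RN N)) (x : RN N) {ρ q : ℝ} (hρ : 0 < ρ)
    (hρq : ρ ≤ q) (hq : q ≤ 2 * ρ) :
    densityRatio E x ρ ≤ 2 ^ N * densityRatio E x q := by
  have hq0 : 0 < q := hρ.trans_le hρq
  have hball : volume (ball x q) ≤ 2 ^ N * volume (ball x ρ) := by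
    rw [Measure.addHaar_ball_of_pos volume x hq0, Measure.addHaar_ball_of_pos volume x hρ,
      finrank_euclideanSpace_fin, ← mul_assoc]
    gcongr
    calc ENNReal.ofReal (q ^ N) ≤ ENNReal.ofReal ((2 * ρ) ^ N) := by gcongr
      _ = 2 ^ N * ENNReal.ofReal (ρ ^ N) := by
        rw [mul_pow, ENNReal.ofReal_mul (by positivity), ENNReal.ofReal_pow zero_le_two,
          ENNReal.ofReal_ofNat]
  rw [densityRatio, ENNReal.div_le_iff (measure_ball_pos volume x hρ).ne' measure_ball_lt_top.ne]
  calc volume (E ∩ ball x ρ) ≤ volume (E ∩ ball x q) := by gcongr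
    _ = densityRatio E x q * volume (ball x q) :=
        (ENNReal.div_mul_cancel (measure_ball_pos volume x hq0).ne' measure_ball_lt_top.ne).symm
    _ ≤ densityRatio E x q * (2 ^ N * volume (ball x ρ)) := by gcongr
    _ = 2 ^ N * densityRatio E x q * volume (ball x ρ) := by ring

theorem hasDensityAt_zero_iff_tendsto_rat {E : Set (RN N)} {x : RN N} :
    HasDensityAt E 0 x ↔
      Tendsto (fun q : ℚ => densityRatio E x q) (comap (↑) (𝓝[>] (0 : ℝ))) (𝓝 0) := by
  rw [HasDensityAt, ENNReal.ofReal_zero]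
  refine ⟨fun h => h.comp tendsto_comap, fun h => ?_⟩
  have h2 : Tendsto (fun q : ℚ => 2 ^ N * densityRatio E x q) (comap (↑) (𝓝[>] (0 : ℝ)))
      (𝓝 0) := by
    simpa using ENNReal.Tendsto.const_mul h (Or.inr (ENNReal.pow_ne_top ENNReal.ofNat_ne_top))
  rw [ENNReal.tendsto_nhds_zero] at h2 ⊢
  intro ε hε
  obtain ⟨s, ⟨U, hU, hUs⟩, hsε⟩ := (h2 ε hε).exists_mem
  obtain ⟨δ, hδ, hδU⟩ := mem_nhdsGT_iff_exists_Ioo_subset.mp hU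
  filter_upwards [Ioo_mem_nhdsGT (half_pos hδ)] with ρ ⟨hρ, hρδ⟩
  obtain ⟨q, hρq, hq⟩ := exists_rat_btwn (by linarith : ρ < 2 * ρ)
  have hqs : q ∈ s := hUs (hδU ⟨hρ.trans hρq, by linarith⟩)
  exact (densityRatio_le_two_pow_mul E x hρ hρq.le hq.le).trans (hsε q hqs)

theorem measurableSet_densityPts_zero {E : Set (RN N)} (hE : MeasurableSet E) :
    MeasurableSet (densityPts E 0) := by
  simp_rw [densityPts, hasDensityAt_zero_iff_tendsto_rat]
  exact measurableSet_tendsto _ fun q => measurable_densityRatio hE q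

end Density

theorem boundary_chebyshev_general (N : ℕ) (Ω : Set (RN N)) (hΩo : IsOpen Ω)
    (u : RN N → ℝ) (hum : Measurable u) (t : ℝ) :
    ENNReal.ofReal t *
        μH[(N : ℝ) - 1]
          ((essBoundary {x ∈ Ω | t < u x} ∪ densityPts {x ∈ Ω | t < u x} 1) ∩
            frontier Ω) ≤
      ∫⁻ y in frontier Ω, erealToENNReal (apUpper u y) ∂μH[(N : ℝ) - 1] := by
  set E : Set (RN N) := {x ∈ Ω | t < u x}
  set M := (densityPts E 0)ᶜ ∩ frontier Ω
  have hM : MeasurableSet M :=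
    (measurableSet_densityPts_zero (hΩo.measurableSet.inter (hum measurableSet_Ioi))).compl.inter
      isClosed_frontier.measurableSet
  have ht_le : ∀ y ∈ M, ENNReal.ofReal t ≤ erealToENNReal (apUpper u y) := fun y hy =>
    ofReal_le_erealToENNReal (coe_le_apUpper_of_not_hasDensityAt_zero (fun _ h => h.2) hy.1)
  rw [essBoundary_union_densityPts_one]
  calc ENNReal.ofReal t * μH[(N : ℝ) - 1] M = ∫⁻ _ in M, ENNReal.ofReal t ∂μH[(N : ℝ) - 1] :=
        (setLIntegral_const M _).symm
    _ ≤ ∫⁻ y in M, erealToENNReal (apUpper u y) ∂μH[(N : ℝ) - 1] := setLIntegral_mono' hM ht_le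
    _ ≤ ∫⁻ y in frontier Ω, erealToENNReal (apUpper u y) ∂μH[(N : ℝ) - 1] :=
        lintegral_mono_set inter_subset_right

/-- Chebyshev-type estimate on the boundary:
`t ⋅ ℋ^{N-1}((∂*Ω^t ∪ Ω^t₁) ∩ ∂Ω) ≤ ∫_{∂Ω} u⁺ dℋ^{N-1}` for every `t > 0`. -/
theorem boundary_chebyshev (N : ℕ) (Ω : Set (RN N)) (hΩo : IsOpen Ω)
    (hΩb : Bornology.IsBounded Ω) (u : RN N → ℝ) (hum : Measurable u)
    (hu0 : ∀ x ∉ Ω, u x = 0) (hpos : ∀ x ∈ Ω, 0 ≤ u x)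
    (huL : MemLp u ⊤ (volume.restrict Ω)) (t : ℝ) (ht : 0 < t) :
    ENNReal.ofReal t *
        μH[(N : ℝ) - 1]
          ((essBoundary {x ∈ Ω | t < u x} ∪ densityPts {x ∈ Ω | t < u x} 1) ∩
            frontier Ω) ≤
      ∫⁻ y in frontier Ω, erealToENNReal (apUpper u y) ∂μH[(N : ℝ) - 1] :=
  boundary_chebyshev_general N Ω hΩo u hum t

end
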